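/- arXiv:1812.03231 — 4 statements merged into one kernel-verified Lean document; each statement's English description precedes it below -/
import Mathlib

section
/- For every real x > 1, the number of primes less than or equal to x, π(x), satisfies c₁ · x / log x ≤ π(x) ≤ c₂ · x / log x for explicit positive constants c₁ and c₂ (e.g., c₁ = 0.92 and c₂ = 1.11 for sufficiently large x). -/
/-!
Both bounds come from Mathlib's elementary Chebyshev estimates: the lower bound
`((x - 1) log 2 - log (x + 2)) / log x ≤ π(x)`, from `2ⁿ ≤ (n + 1) · lcm(1, …, n)`, and the
upper bound `π(x) ≤ log 4 · x / log √x + √x`, from `∏_{p ≤ x} p ≤ 4ˣ`. What remains is to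
absorb the error terms, using `log x ≤ 2√x` above and `π(x) ≥ 1` for small `x` below.
-/

open Real

theorem sqrt_mul_log_le_two_mul {x : ℝ} (hx : 0 ≤ x) : √x * log x ≤ 2 * x := by
  rcases hx.eq_or_lt with rfl | hx
  · simp
  have hlog : log x ≤ 2 * √x := by
    have := log_le_sub_one_of_pos (sqrt_pos.mpr hx)
    rw [log_sqrt hx.le] at this
    linarith
  calc √x * log x ≤ √x * (2 * √x) := by gcongr
    _ = 2 * x := by rw [mul_left_comm, mul_self_sqrt hx.le]

theorem primeCounting_floor_le {x : ℝ} (hx : 1 < x) :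
    (Nat.primeCounting ⌊x⌋₊ : ℝ) ≤ (2 * log 4 + 2) * x / log x := by
  have hlog : 0 < log x := log_pos hx
  have hsqrt : √x ≤ 2 * x / log x := by
    rw [le_div_iff₀ hlog]
    exact sqrt_mul_log_le_two_mul (by linarith)
  calc (Nat.primeCounting ⌊x⌋₊ : ℝ) ≤ log 4 * x / log √x + √x := Chebyshev.pi_le_log4_mul_div hx
    _ = 2 * log 4 * x / log x + √x := by rw [log_sqrt (by linarith)]; field_simp
    _ ≤ 2 * log 4 * x / log x + 2 * x / log x := by gcongr
    _ = (2 * log 4 + 2) * x / log x := by ring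

theorem self_div_ten_le_sub_one_mul_log_two_sub_log {x : ℝ} (hx : 6 ≤ x) :
    x / 10 ≤ (x - 1) * log 2 - log (x + 2) := by
  -- the tangent line of `log` at `8`
  have htangent : log (x + 2) ≤ 3 * log 2 + (x + 2) / 8 - 1 := by
    have h := log_le_sub_one_of_pos (x := (x + 2) / 8) (by linarith)
    rw [log_div (by linarith) (by norm_num), show (8 : ℝ) = 2 ^ 3 by norm_num, log_pow] at h
    push_cast at h
    linarith
  nlinarith [log_two_gt_d9]

theorem one_le_primeCounting_floor {x : ℝ} (hx : 2 ≤ x) : 1 ≤ Nat.primeCounting ⌊x⌋₊ := by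
  rw [Nat.one_le_iff_ne_zero, Ne, Nat.primeCounting_eq_zero_iff, not_le]
  exact Nat.le_floor (by exact_mod_cast hx)

theorem inv_ten_mul_div_log_le_primeCounting_floor {x : ℝ} (hx : 2 ≤ x) :
    10⁻¹ * x / log x ≤ Nat.primeCounting ⌊x⌋₊ := by
  have hlog2 : log 2 ≤ log x := log_le_log (by norm_num) hx
  have hlog : 0 < log x := log_pos (by linarith)
  rcases lt_or_ge x 6 with hsmall | hlarge
  · calc 10⁻¹ * x / log x ≤ 1 := by
          rw [div_le_one hlog]
          linarith [log_two_gt_d9]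
      _ ≤ Nat.primeCounting ⌊x⌋₊ := by exact_mod_cast one_le_primeCounting_floor hx
  · calc 10⁻¹ * x / log x ≤ ((x - 1) * log 2 - log (x + 2)) / log x := by
          gcongr
          linarith [self_div_ten_le_sub_one_mul_log_two_sub_log hlarge]
      _ ≤ Nat.primeCounting ⌊x⌋₊ := Chebyshev.pi_ge' (by linarith)

/-- Chebyshev's theorem on the order of magnitude of π(x). -/
theorem chebyshev_prime_counting :
    ∃ c₁ c₂ : ℝ, 0 < c₁ ∧ c₁ < c₂ ∧
      ∀ x : ℝ, 2 ≤ x →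
        c₁ * x / Real.log x ≤ (Nat.primeCounting ⌊x⌋₊ : ℝ) ∧
        (Nat.primeCounting ⌊x⌋₊ : ℝ) ≤ c₂ * x / Real.log x := by
  have hlog4 : 0 < log 4 := log_pos (by norm_num)
  refine ⟨10⁻¹, 2 * log 4 + 2, by norm_num, by linarith, fun x hx => ?_⟩
  exact ⟨inv_ten_mul_div_log_le_primeCounting_floor hx, primeCounting_floor_le (by linarith)⟩
end

section
/- For an odd prime p and an integer a coprime to p, the Legendre symbol (a/p) equals the sign of the permutation of ℤ/pℤ given by multiplication by a. -/
/-!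
Both sides are homomorphisms `(ZMod p)ˣ → ℤˣ`, and `(ZMod p)ˣ` is cyclic, so it suffices to
compare them on a generator `g`. Multiplication by `g` permutes the `p - 1` nonzero residues in
a single cycle of even length, so its sign is `-1`; and `g` is not a square, since otherwise every
unit would be one, so its Legendre symbol is `-1` as well.
-/

open Equiv Equiv.Perm

theorem Units.smul_eq_self_iff {M₀ : Type*} [MonoidWithZero M₀] [IsRightCancelMulZero M₀]
    {u : M₀ˣ} (hu : u ≠ 1) (x : M₀) : u • x = x ↔ x = 0 := by
  change (u : M₀) * x = x ↔ x = 0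
  rw [mul_left_eq_self₀, ← Units.val_one, Units.val_inj]
  simp [hu]

theorem Equiv.mulLeft₀_eq_toPerm_mk0 {G₀ : Type*} [GroupWithZero G₀] (a : G₀) (ha : a ≠ 0) :
    Equiv.mulLeft₀ a ha = MulAction.toPerm (Units.mk0 a ha) :=
  rfl

section FiniteField

variable {F : Type*} [Field F]

theorem isCycle_toPerm_of_forall_mem_zpowers {g : Fˣ} (hg1 : g ≠ 1)
    (hg : ∀ u, u ∈ Subgroup.zpowers g) : (MulAction.toPerm g : Perm F).IsCycle := by
  have hmove (x : F) : MulAction.toPerm g x ≠ x ↔ x ≠ 0 := by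
    simpa using (Units.smul_eq_self_iff hg1 x).not
  refine ⟨1, (hmove 1).2 one_ne_zero, fun y hy => ?_⟩
  obtain ⟨n, hn⟩ := Subgroup.mem_zpowers_iff.1 (hg (Units.mk0 y ((hmove y).1 hy)))
  refine ⟨n, ?_⟩
  have := map_zpow (MulAction.toPermHom Fˣ F) g n
  simp only [MulAction.toPermHom_apply] at this
  simp [← this, hn]

theorem ne_one_of_forall_mem_zpowers (hF : ringChar F ≠ 2) {g : Fˣ}
    (hg : ∀ u, u ∈ Subgroup.zpowers g) : g ≠ 1 := by
  rintro rfl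
  obtain ⟨n, hn⟩ := Subgroup.mem_zpowers_iff.1 (hg (-1))
  exact Ring.neg_one_ne_one_of_char_ne_two hF (by simpa using congrArg Units.val hn.symm)

variable [Fintype F] [DecidableEq F]

theorem support_toPerm_units {u : Fˣ} (hu : u ≠ 1) :
    (MulAction.toPerm u : Perm F).support = {0}ᶜ := by
  ext x
  simp [Units.smul_eq_self_iff hu]

theorem sign_toPerm_of_forall_mem_zpowers (hF : ringChar F ≠ 2) {g : Fˣ}
    (hg : ∀ u, u ∈ Subgroup.zpowers g) : sign (MulAction.toPerm g : Perm F) = -1 := by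
  have hg1 := ne_one_of_forall_mem_zpowers hF hg
  rw [(isCycle_toPerm_of_forall_mem_zpowers hg1 hg).sign, support_toPerm_units hg1,
    Finset.card_compl, Finset.card_singleton]
  have := FiniteField.odd_card_of_char_ne_two hF
  rw [Even.neg_one_pow (Nat.even_iff.2 (by omega))]

theorem quadraticChar_of_forall_mem_zpowers (hF : ringChar F ≠ 2) {g : Fˣ}
    (hg : ∀ u, u ∈ Subgroup.zpowers g) : quadraticChar F g = -1 := by
  rw [quadraticChar_neg_one_iff_not_isSquare]
  rintro ⟨r, hr⟩
  obtain ⟨a, ha⟩ := FiniteField.exists_nonsquare hF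
  have ha0 : a ≠ 0 := by rintro rfl; exact ha IsSquare.zero
  obtain ⟨n, hn⟩ := Subgroup.mem_zpowers_iff.1 (hg (Units.mk0 a ha0))
  have hr0 : r ≠ 0 := by rintro rfl; simp at hr
  have hsq : IsSquare g := ⟨Units.mk0 r hr0, Units.ext hr⟩
  have : IsSquare (Units.mk0 a ha0) := hn ▸ hsq.zpow n
  exact ha (by simpa using this.map (Units.coeHom F))

theorem quadraticChar_eq_sign_toPerm (hF : ringChar F ≠ 2) (u : Fˣ) :
    quadraticChar F u = sign (MulAction.toPerm u : Perm F) := by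
  obtain ⟨g, hg⟩ := IsCyclic.exists_generator (α := Fˣ)
  have : (quadraticChar F).toUnitHom = sign.comp (MulAction.toPermHom Fˣ F) := by
    rw [MonoidHom.eq_iff_eq_on_generator hg]
    ext
    simp [quadraticChar_of_forall_mem_zpowers hF hg, sign_toPerm_of_forall_mem_zpowers hF hg]
  simpa using congrArg (fun f => (f u : ℤ)) this

end FiniteField

/-- Zolotarev's lemma: for an odd prime `p` and `a` coprime to `p`, the Legendre
symbol `(a/p)` equals the sign of the permutation of `ℤ/pℤ` given by
multiplication by `a`. -/
theorem zolotarev_lemma (p : ℕ) [Fact p.Prime] (hp : p ≠ 2) (a : ℤ)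
    (ha : IsCoprime a (p : ℤ)) :
    legendreSym p a =
      (Equiv.Perm.sign (Equiv.mulLeft₀ (a : ZMod p)
        (fun h => by
          have hd : (p : ℤ) ∣ a := (ZMod.intCast_zmod_eq_zero_iff_dvd a p).mp h
          exact (Int.prime_iff_natAbs_prime.mpr (by simpa using (Fact.out : p.Prime))).not_unit
            (ha.isUnit_of_dvd' hd dvd_rfl))) : ℤ) := by
  rw [legendreSym, Equiv.mulLeft₀_eq_toPerm_mk0,
    ← quadraticChar_eq_sign_toPerm (by rwa [ZMod.ringChar_zmod_n]), Units.val_mk0]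
end

section
/- Let X and Y be Banach spaces and F : X → Y be Fréchet differentiable with F'(x₀) invertible. Under the Kantorovich conditions (‖F'(x₀)⁻¹‖ ≤ β, ‖F'(x₀)⁻¹ F(x₀)‖ ≤ η, F' is Lipschitz with constant K on a suitable ball, and h = βKη ≤ 1/2), the Newton iteration x_{k+1} = x_k - F'(x_k)⁻¹ F(x_k) is well-defined and converges to a root x* of F in that ball. -/
open Filter Topology Metric

lemma kant_inv_aux {X : Type*} [NormedAddCommGroup X] [NormedSpace ℝ X] [CompleteSpace X]
    (E : X →L[ℝ] X) (h : ‖E‖ < 1) :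
    Ring.inverse (1 - E) * (1 - E) = 1 ∧ (1 - E) * Ring.inverse (1 - E) = 1 ∧
      ‖Ring.inverse (1 - E)‖ ≤ (1 - ‖E‖)⁻¹ := by
  have h1 : Ring.inverse (1 - E) = ↑(Units.oneSub E h)⁻¹ := NormedRing.inverse_one_sub E h
  refine ⟨?_, ?_, ?_⟩
  · rw [h1]
    have := Units.inv_mul (Units.oneSub E h)
    simpa [Units.val_oneSub] using this
  · rw [h1]
    have := Units.mul_inv (Units.oneSub E h)
    simpa [Units.val_oneSub] using this
  · rw [← geom_series_eq_inverse E h]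
    refine tsum_of_norm_bounded (hasSum_geometric_of_lt_one (norm_nonneg E) h) ?_
    intro n
    cases n with
    | zero => simp; exact ContinuousLinearMap.norm_id_le
    | succ n => exact norm_pow_le' E n.succ_pos

lemma kant_taylor_aux {X Y : Type*} [NormedAddCommGroup X] [NormedSpace ℝ X]
    [NormedAddCommGroup Y] [NormedSpace ℝ Y]
    (F : X → Y) (F' : X → X →L[ℝ] Y) {s : Set X} (hs : Convex ℝ s)
    (hd : ∀ z ∈ s, HasFDerivAt F (F' z) z) {K : ℝ}
    {x y : X} (hx : x ∈ s) (hy : y ∈ s)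
    (hLip : ∀ z ∈ s, ‖F' z - F' x‖ ≤ K * ‖z - x‖) :
    ‖F y - F x - F' x (y - x)‖ ≤ K / 2 * ‖y - x‖ ^ 2 := by
  set v := y - x with hv
  set g : ℝ → Y := fun t => F (x + t • v) - t • F' x v - F x with hg
  have hmem : ∀ t ∈ Set.Icc (0:ℝ) 1, x + t • v ∈ s := fun t ht =>
    hs.add_smul_sub_mem hx hy ht
  have hgd : ∀ t ∈ Set.Icc (0:ℝ) 1, HasDerivAt g ((F' (x + t • v) - F' x) v) t := by
    intro t ht
    have h1 : HasDerivAt (fun t : ℝ => x + t • v) v t := by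
      simpa using ((hasDerivAt_id t).smul_const v).const_add x
    have h2 : HasDerivAt (fun t : ℝ => F (x + t • v)) (F' (x + t • v) v) t :=
      (hd _ (hmem t ht)).comp_hasDerivAt t h1
    have h3 : HasDerivAt (fun t : ℝ => t • F' x v) (F' x v) t := by
      simpa using (hasDerivAt_id t).smul_const (F' x v)
    simpa [hg, ContinuousLinearMap.sub_apply] using (h2.sub h3).sub_const (F x)
  have hB : ∀ t : ℝ, HasDerivAt (fun t : ℝ => K * ‖v‖ ^ 2 * (t ^ 2 / 2)) (K * ‖v‖ ^ 2 * t) t := by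
    intro t
    have := ((hasDerivAt_pow 2 t).div_const 2).const_mul (K * ‖v‖ ^ 2)
    refine this.congr_deriv ?_
    norm_num
  have key : ∀ u ∈ Set.Icc (0:ℝ) 1, ‖g u‖ ≤ K * ‖v‖ ^ 2 * (u ^ 2 / 2) := by
    refine image_norm_le_of_norm_deriv_right_le_deriv_boundary
      (fun t ht => (hgd t ht).continuousAt.continuousWithinAt)
      (fun t ht => (hgd t (Set.Ico_subset_Icc_self ht)).hasDerivWithinAt) ?_ hB ?_
    · simp [hg]
    · intro t ht
      calc ‖(F' (x + t • v) - F' x) v‖ ≤ ‖F' (x + t • v) - F' x‖ * ‖v‖ :=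
            (F' (x + t • v) - F' x).le_opNorm v
        _ ≤ (K * ‖x + t • v - x‖) * ‖v‖ := by
            gcongr; exact hLip _ (hmem t (Set.Ico_subset_Icc_self ht))
        _ = K * ‖v‖ ^ 2 * t := by
            simp [norm_smul, abs_of_nonneg ht.1]; ring
  have := key 1 (by norm_num)
  simp only [hg, one_smul] at this
  have hxy : x + v = y := by simp [hv]
  rw [hxy] at this
  calc ‖F y - F x - F' x (y - x)‖ = ‖F y - F' x v - F x‖ := by rw [hv]; congr 1; abel
    _ ≤ K * ‖v‖ ^ 2 * (1 ^ 2 / 2) := this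
    _ = K / 2 * ‖y - x‖ ^ 2 := by rw [hv]; ring

set_option maxHeartbeats 1000000 in

/-- Kantorovich's theorem on Newton's method in Banach spaces: under the Kantorovich
conditions `‖F'(x₀)⁻¹‖ ≤ β`, `‖F'(x₀)⁻¹ F(x₀)‖ ≤ η`, Lipschitz continuity of `F'`
with constant `K` on the ball `B̄(x₀, 2η)`, and `β * K * η ≤ 1/2`, the Newton
iteration is well defined (each derivative is invertible) and converges to a root
of `F` in that ball. -/
theorem kantorovich_newton {X Y : Type*}
    [NormedAddCommGroup X] [NormedSpace ℝ X] [CompleteSpace X]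
    [NormedAddCommGroup Y] [NormedSpace ℝ Y] [CompleteSpace Y]
    (F : X → Y) (F' : X → X →L[ℝ] Y) (x₀ : X) (β η K : ℝ)
    (hβ : 0 < β) (hη : 0 < η) (hK : 0 < K)
    (hdiff : ∀ x ∈ closedBall x₀ (2 * η), HasFDerivAt F (F' x) x)
    (A₀ : Y →L[ℝ] X)
    (hA₀l : ∀ y, F' x₀ (A₀ y) = y) (hA₀r : ∀ x, A₀ (F' x₀ x) = x)
    (hβ' : ‖A₀‖ ≤ β)
    (hη' : ‖A₀ (F x₀)‖ ≤ η)
    (hLip : ∀ x ∈ closedBall x₀ (2 * η), ∀ y ∈ closedBall x₀ (2 * η),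
      ‖F' x - F' y‖ ≤ K * ‖x - y‖)
    (hkant : β * K * η ≤ 1 / 2) :
    ∃ (xs : ℕ → X) (As : ℕ → (Y →L[ℝ] X)),
      xs 0 = x₀ ∧
      (∀ k, xs k ∈ closedBall x₀ (2 * η)) ∧
      (∀ k, (∀ y, F' (xs k) (As k y) = y) ∧ (∀ x, As k (F' (xs k) x) = x)) ∧
      (∀ k, xs (k + 1) = xs k - As k (F (xs k))) ∧
      ∃ xstar ∈ closedBall x₀ (2 * η),
        F xstar = 0 ∧ Tendsto xs atTop (𝓝 xstar) := by
  classical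
  set step : X × (Y →L[ℝ] X) → X × (Y →L[ℝ] X) := fun p =>
    (p.1 - p.2 (F p.1),
     (Ring.inverse ((1 : X →L[ℝ] X)
        - p.2.comp (F' p.1 - F' (p.1 - p.2 (F p.1))))).comp p.2) with hstep
  set xs : ℕ → X := fun k => (step^[k] (x₀, A₀)).1 with hxs
  set As : ℕ → (Y →L[ℝ] X) := fun k => (step^[k] (x₀, A₀)).2 with hAs
  have hx0 : xs 0 = x₀ := rfl
  have hxsucc : ∀ k, xs (k + 1) = xs k - As k (F (xs k)) := by
    intro k
    simp only [hxs, hAs, Function.iterate_succ_apply', hstep]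
  have hAsucc : ∀ k, As (k + 1) =
      (Ring.inverse ((1 : X →L[ℝ] X)
          - (As k).comp (F' (xs k) - F' (xs k - As k (F (xs k)))))).comp (As k) := by
    intro k
    simp only [hxs, hAs, Function.iterate_succ_apply', hstep]
  -- main invariant
  have main : ∀ k, ‖xs k - x₀‖ ≤ 2 * η - 2 * η / 2 ^ k ∧
      (∀ y, F' (xs k) (As k y) = y) ∧ (∀ z, As k (F' (xs k) z) = z) ∧
      ‖As k‖ ≤ 2 ^ k * β ∧ ‖As k (F (xs k))‖ ≤ η / 2 ^ k := by
    intro k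
    induction k with
    | zero =>
      refine ⟨by simp [hx0], ?_, ?_, by simpa [hAs] using hβ', by simpa [hx0, hAs] using hη'⟩
      · simpa [hx0, hAs] using hA₀l
      · simpa [hx0, hAs] using hA₀r
    | succ k ih =>
      obtain ⟨ha, hl, hr, hb, hn⟩ := ih
      have h2k : (0:ℝ) < 2 ^ k := by positivity
      set x := xs k with hxdef
      set A := As k with hAdef
      set x' := xs (k + 1) with hx'def
      have hx'eq : x' = x - A (F x) := hxsucc k
      -- membership
      have hxball : x ∈ closedBall x₀ (2 * η) := by
        rw [mem_closedBall_iff_norm]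
        have hq : (0:ℝ) ≤ 2 * η / 2 ^ k := by positivity
        linarith [ha]
      have ha' : ‖x' - x₀‖ ≤ 2 * η - 2 * η / 2 ^ (k + 1) := by
        have h1 : ‖x' - x₀‖ ≤ ‖x - x₀‖ + ‖A (F x)‖ := by
          rw [hx'eq]
          calc ‖x - A (F x) - x₀‖ = ‖(x - x₀) + (-(A (F x)))‖ := by
                rw [show x - A (F x) - x₀ = (x - x₀) + (-(A (F x))) from by abel]
            _ ≤ ‖x - x₀‖ + ‖-(A (F x))‖ := norm_add_le _ _
            _ = ‖x - x₀‖ + ‖A (F x)‖ := by rw [norm_neg]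
        have e1 : 2 * η / 2 ^ (k + 1) = η / 2 ^ k := by
          rw [pow_succ]
          field_simp
        have e2 : 2 * η / 2 ^ k = 2 * (η / 2 ^ k) := by ring
        linarith [h1, ha, hn]
      have hx'ball : x' ∈ closedBall x₀ (2 * η) := by
        rw [mem_closedBall_iff_norm]
        have hq : (0:ℝ) ≤ 2 * η / 2 ^ (k + 1) := by positivity
        linarith [ha']
      -- quadratic estimate for F x'
      have hdist : ‖x' - x‖ ≤ η / 2 ^ k := by
        rw [hx'eq]; simpa using hn
      have hFx' : ‖F x'‖ ≤ K / 2 * (η / 2 ^ k) ^ 2 := by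
        have htay := kant_taylor_aux F F' (convex_closedBall x₀ (2*η)) hdiff hxball hx'ball
          (fun z hz => hLip z hz x hxball)
        have hder : F' x (x' - x) = -(F x) := by
          rw [hx'eq, show x - A (F x) - x = -(A (F x)) from by abel, map_neg, hl]
        have heq : F x' - F x - F' x (x' - x) = F x' := by rw [hder]; abel
        rw [← heq]
        refine htay.trans ?_
        have hsq : ‖x' - x‖ ^ 2 ≤ (η / 2 ^ k) ^ 2 :=
          pow_le_pow_left₀ (norm_nonneg _) hdist 2
        have : (0:ℝ) ≤ K / 2 := by positivity
        exact mul_le_mul_of_nonneg_left hsq this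
      -- perturbation operator E
      set E : X →L[ℝ] X := A.comp (F' x - F' x') with hEdef
      have hEnorm : ‖E‖ ≤ 1 / 2 := by
        have h1 : ‖E‖ ≤ ‖A‖ * ‖F' x - F' x'‖ := A.opNorm_comp_le _
        have h2 : ‖F' x - F' x'‖ ≤ K * ‖x - x'‖ := hLip x hxball x' hx'ball
        have h3 : ‖x - x'‖ ≤ η / 2 ^ k := by rw [← norm_neg]; simpa [neg_sub] using hdist
        have h5 : ‖F' x - F' x'‖ ≤ K * (η / 2 ^ k) :=
          h2.trans (mul_le_mul_of_nonneg_left h3 hK.le)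
        have h4 : ‖E‖ ≤ (2 ^ k * β) * (K * (η / 2 ^ k)) :=
          h1.trans (mul_le_mul hb h5 (norm_nonneg _) (by positivity))
        have he : (2 ^ k * β) * (K * (η / 2 ^ k)) = β * K * η := by field_simp
        rw [he] at h4
        linarith
      have hE1 : ‖E‖ < 1 := lt_of_le_of_lt hEnorm (by norm_num)
      obtain ⟨hinv1, hinv2, hinvn⟩ := kant_inv_aux E hE1
      have hinvn2 : ‖Ring.inverse ((1: X →L[ℝ] X) - E)‖ ≤ 2 := by
        refine hinvn.trans ?_
        rw [show (2:ℝ) = (1 - 1/2)⁻¹ by norm_num]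
        apply inv_anti₀
        · norm_num
        · linarith
      have hAnew : As (k + 1) = (Ring.inverse ((1 : X →L[ℝ] X) - E)).comp A := by
        rw [hAsucc k, hEdef, ← hx'eq]
      -- A ∘ F' x' = 1 - E
      have hAF : A.comp (F' x') = (1 : X →L[ℝ] X) - E := by
        ext z
        simp [hEdef, ContinuousLinearMap.comp_apply, ContinuousLinearMap.sub_apply, hr z]
      -- left inverse at k+1
      have hl' : ∀ z, As (k + 1) (F' x' z) = z := by
        intro z
        have : (As (k+1)).comp (F' x') = 1 := by
          rw [hAnew, ContinuousLinearMap.comp_assoc, hAF]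
          exact hinv1
        calc As (k+1) (F' x' z) = ((As (k+1)).comp (F' x')) z := rfl
          _ = z := by rw [this]; rfl
      -- right inverse at k+1
      have hr' : ∀ y, F' x' (As (k + 1) y) = y := by
        intro y
        set E' : Y →L[ℝ] Y := (F' x - F' x').comp A with hE'def
        have hE'norm : ‖E'‖ < 1 := by
          have h1 : ‖E'‖ ≤ ‖F' x - F' x'‖ * ‖A‖ := (F' x - F' x').opNorm_comp_le _
          have h2 : ‖F' x - F' x'‖ ≤ K * ‖x - x'‖ := hLip x hxball x' hx'ball
          have h3 : ‖x - x'‖ ≤ η / 2 ^ k := by rw [← norm_neg]; simpa [neg_sub] using hdist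
          have h5 : ‖F' x - F' x'‖ ≤ K * (η / 2 ^ k) :=
            h2.trans (mul_le_mul_of_nonneg_left h3 hK.le)
          have h4 : ‖E'‖ ≤ (K * (η / 2 ^ k)) * (2 ^ k * β) :=
            h1.trans (mul_le_mul h5 hb (norm_nonneg _) (by positivity))
          have he : (K * (η / 2 ^ k)) * (2 ^ k * β) = β * K * η := by field_simp
          rw [he] at h4
          linarith
        obtain ⟨hinv1', hinv2', _⟩ := kant_inv_aux E' hE'norm
        have hFA : (F' x').comp A = (1 : Y →L[ℝ] Y) - E' := by
          ext z
          simp [hE'def, ContinuousLinearMap.comp_apply, ContinuousLinearMap.sub_apply, hl z]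
        set w := A ((Ring.inverse ((1 : Y →L[ℝ] Y) - E')) y) with hwdef
        have hFw : F' x' w = y := by
          have : (F' x').comp (A.comp (Ring.inverse ((1 : Y →L[ℝ] Y) - E'))) = 1 := by
            rw [← ContinuousLinearMap.comp_assoc, hFA]
            exact hinv2'
          calc F' x' w = ((F' x').comp (A.comp (Ring.inverse ((1:Y →L[ℝ] Y) - E')))) y := rfl
            _ = y := by rw [this]; rfl
        calc F' x' (As (k+1) y) = F' x' (As (k+1) (F' x' w)) := by rw [hFw]
          _ = F' x' w := by rw [hl' w]
          _ = y := hFw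
      -- norm bound for As (k+1)
      have hb' : ‖As (k + 1)‖ ≤ 2 ^ (k + 1) * β := by
        rw [hAnew]
        calc ‖(Ring.inverse ((1 : X →L[ℝ] X) - E)).comp A‖
            ≤ ‖Ring.inverse ((1 : X →L[ℝ] X) - E)‖ * ‖A‖ :=
              ContinuousLinearMap.opNorm_comp_le _ _
          _ ≤ 2 * (2 ^ k * β) :=
              mul_le_mul hinvn2 hb (norm_nonneg _) (by norm_num)
          _ = 2 ^ (k + 1) * β := by ring
      -- residual bound
      have hn' : ‖As (k + 1) (F x')‖ ≤ η / 2 ^ (k + 1) := by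
        have h1 : ‖As (k+1) (F x')‖ ≤ ‖As (k+1)‖ * ‖F x'‖ := (As (k+1)).le_opNorm _
        have h2 : ‖As (k+1) (F x')‖ ≤ (2 ^ (k+1) * β) * (K / 2 * (η / 2 ^ k) ^ 2) :=
          h1.trans (mul_le_mul hb' hFx' (norm_nonneg _) (by positivity))
        have he : (2 ^ (k+1) * β) * (K / 2 * (η / 2 ^ k) ^ 2) = (β * K * η) * (η / 2 ^ k) := by
          field_simp
          ring
        rw [he] at h2
        have h3 : (β * K * η) * (η / 2 ^ k) ≤ (1/2) * (η / 2 ^ k) :=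
          mul_le_mul_of_nonneg_right hkant (by positivity)
        have h4 : (1/2) * (η / 2 ^ k) = η / 2 ^ (k+1) := by
          rw [pow_succ]
          ring
        linarith
      exact ⟨ha', hr', hl', hb', hn'⟩
  -- extract conclusions
  have hball : ∀ k, xs k ∈ closedBall x₀ (2 * η) := by
    intro k
    rw [mem_closedBall_iff_norm]
    have := (main k).1
    have : ‖xs k - x₀‖ ≤ 2 * η - 2 * η / 2 ^ k := this
    nlinarith [this, div_nonneg (by positivity : (0:ℝ) ≤ 2*η) (by positivity : (0:ℝ) ≤ (2:ℝ)^k)]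
  have hcauchy : CauchySeq xs := by
    apply cauchySeq_of_le_geometric (1/2) η (by norm_num)
    intro n
    rw [dist_eq_norm, hxsucc n]
    have := (main n).2.2.2.2
    calc ‖xs n - (xs n - As n (F (xs n)))‖ = ‖As n (F (xs n))‖ := by
          rw [show xs n - (xs n - As n (F (xs n))) = As n (F (xs n)) by abel]
      _ ≤ η / 2 ^ n := this
      _ = η * (1/2) ^ n := by rw [div_pow, one_pow]; ring
  obtain ⟨xstar, hxstar⟩ := cauchySeq_tendsto_of_complete hcauchy
  have hxstarball : xstar ∈ closedBall x₀ (2 * η) :=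
    isClosed_closedBall.mem_of_tendsto hxstar (Eventually.of_forall hball)
  have hFz : F xstar = 0 := by
    have hFx : ∀ k, ‖F (xs k)‖ ≤ (‖F' x₀‖ + K * (2 * η)) * η * (1/2) ^ k := by
      intro k
      have h1 : F (xs k) = F' (xs k) (As k (F (xs k))) := ((main k).2.1 (F (xs k))).symm
      have h2 : ‖F' (xs k)‖ ≤ ‖F' x₀‖ + K * (2 * η) := by
        calc ‖F' (xs k)‖ = ‖F' x₀ + (F' (xs k) - F' x₀)‖ := by
              rw [show F' x₀ + (F' (xs k) - F' x₀) = F' (xs k) from by abel]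
          _ ≤ ‖F' x₀‖ + ‖F' (xs k) - F' x₀‖ := norm_add_le _ _
          _ ≤ ‖F' x₀‖ + K * ‖xs k - x₀‖ := by
              have := hLip _ (hball k) _ (mem_closedBall_self (by positivity : (0:ℝ) ≤ 2 * η))
              linarith
          _ ≤ ‖F' x₀‖ + K * (2 * η) := by
              have hd : ‖xs k - x₀‖ ≤ 2 * η := by
                rw [← dist_eq_norm]; exact hball k
              nlinarith
      calc ‖F (xs k)‖ = ‖F' (xs k) (As k (F (xs k)))‖ := by rw [← h1]
        _ ≤ ‖F' (xs k)‖ * ‖As k (F (xs k))‖ := (F' (xs k)).le_opNorm _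
        _ ≤ (‖F' x₀‖ + K * (2 * η)) * (η / 2 ^ k) :=
            mul_le_mul h2 ((main k).2.2.2.2) (norm_nonneg _)
              (by positivity)
        _ = (‖F' x₀‖ + K * (2 * η)) * η * (1/2) ^ k := by
            rw [div_pow, one_pow]; ring
    have ht0 : Tendsto (fun k => F (xs k)) atTop (𝓝 0) := by
      rw [tendsto_zero_iff_norm_tendsto_zero]
      refine squeeze_zero (fun k => norm_nonneg _) hFx ?_
      rw [show (0:ℝ) = (‖F' x₀‖ + K * (2 * η)) * η * 0 by ring]
      exact (tendsto_pow_atTop_nhds_zero_of_lt_one (by norm_num) (by norm_num)).const_mul _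
    have ht1 : Tendsto (fun k => F (xs k)) atTop (𝓝 (F xstar)) :=
      ((hdiff xstar hxstarball).continuousAt.tendsto).comp hxstar
    exact tendsto_nhds_unique ht1 ht0
  exact ⟨xs, As, hx0, hball, fun k => ⟨(main k).2.1, (main k).2.2.1⟩, hxsucc,
    xstar, hxstarball, hFz, hxstar⟩
end

section
/- Let f : [a,b] → ℝ be continuous and suppose for every x in [a,b] the upper right Dini derivative of f at x is nonnegative. Then f is nondecreasing on [a,b]. -/
open Filter Topology

/-!
A nonnegative upper right Dini derivative means that at every point `x` the function `-f` has
difference quotients `< r` arbitrarily close to the right of `x`, for every `r > 0`. This is exactly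
the hypothesis of Mathlib's fencing theorem, which then bounds `-f` on `[x, b]` by the constant
`-f x`.
-/

theorem frequently_lt_slope_of_lt_limsup_dini {f : ℝ → ℝ} {x c : ℝ}
    (hc : (c : EReal) < limsup (fun h : ℝ => ((f (x + h) - f x) / h : EReal)) (𝓝[>] 0)) :
    ∃ᶠ t in 𝓝[>] x, c < slope f x t := by
  have hquot : ∃ᶠ h in 𝓝[>] (0 : ℝ), c < (f (x + h) - f x) / h := by
    refine (frequently_lt_of_lt_limsup (by isBoundedDefault) hc).mono fun h hh => ?_
    rwa [← EReal.coe_sub, ← EReal.coe_div, EReal.coe_lt_coe_iff] at hh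
  rw [← add_zero x, ← Filter.map_add_left_nhdsGT, frequently_map]
  simpa [slope_def_field] using hquot

theorem monotoneOn_of_frequently_neg_lt_slope {f : ℝ → ℝ} {a b : ℝ}
    (hf : ContinuousOn f (Set.Icc a b))
    (hslope : ∀ x ∈ Set.Ico a b, ∀ r > 0, ∃ᶠ t in 𝓝[>] x, -r < slope f x t) :
    MonotoneOn f (Set.Icc a b) := by
  intro x hx y hy hxy
  have fence : ∀ ⦃t⦄, t ∈ Set.Icc x b → -f t ≤ -f x :=
    image_le_of_liminf_slope_right_le_deriv_boundary (B := fun _ => -f x) (B' := fun _ => 0)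
      (hf.mono (Set.Icc_subset_Icc_left hx.1)).neg le_rfl continuousOn_const
      (fun t _ => hasDerivWithinAt_const t _ _)
      fun t ht r hr => (hslope t ⟨hx.1.trans ht.1, ht.2⟩ r hr).mono fun s hs => by
        rw [slope_neg_fun, Pi.neg_apply, Pi.neg_apply]; linarith
  exact neg_le_neg_iff.mp (fence ⟨hxy, hy.2⟩)

theorem monotone_of_dini_deriv_nonneg_general (f : ℝ → ℝ) (a b : ℝ)
    (hcont : ContinuousOn f (Set.Icc a b))
    (hdini : ∀ x ∈ Set.Ico a b,
      0 ≤ Filter.limsup (fun h : ℝ => ((f (x + h) - f x) / h : EReal)) (𝓝[>] (0:ℝ))) :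
    MonotoneOn f (Set.Icc a b) :=
  monotoneOn_of_frequently_neg_lt_slope hcont fun x hx _ hr =>
    frequently_lt_slope_of_lt_limsup_dini <|
      (EReal.coe_lt_coe_iff.mpr (neg_neg_of_pos hr)).trans_le (hdini x hx)

/-- If `f` is continuous on `[a,b]` and its upper right Dini derivative is
nonnegative at every point of `[a,b)`, then `f` is nondecreasing on `[a,b]`. -/
theorem monotone_of_dini_deriv_nonneg (f : ℝ → ℝ) (a b : ℝ) (hab : a ≤ b)
    (hcont : ContinuousOn f (Set.Icc a b))
    (hdini : ∀ x ∈ Set.Ico a b,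
      0 ≤ Filter.limsup (fun h : ℝ => ((f (x + h) - f x) / h : EReal)) (𝓝[>] (0:ℝ))) :
    MonotoneOn f (Set.Icc a b) :=
  monotone_of_dini_deriv_nonneg_general f a b hcont hdini
end
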